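/- For a walk on a graph where the robot always moves to a neighbor minimizing visit frequency (LFV-v), after each step the multiset of neighbor frequencies of the current vertex u with frequency g contains at least (g mod δ) neighbors with frequency ≥ ⌊g/δ⌋ + 1 and all neighbors have frequency ≥ ⌊g/δ⌋, assuming this invariant holds inductively and δ = deg(u). -/

import Mathlib

/-!
Write `g = q δ + r` with `q = g / δ` and `r = g % δ < δ`. Replacing a minimum `m ≥ q` by `m + 1`
yields at least `r + 1` elements `≥ q + 1`: if `m = q` the new element `q + 1` is one more such
element, and if `m > q` all `δ > r` elements already are. When `δ ∤ g + 1` the new quotient is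
`q` and the new remainder `r + 1`. When `δ ∣ g + 1` we have `r + 1 = δ`, so every element is
`≥ q + 1 = (g + 1) / δ`.
-/

namespace Nat

theorem succ_mod_of_not_dvd {a b : ℕ} (h : ¬b ∣ a + 1) : (a + 1) % b = a % b + 1 := by
  have hsucc := Nat.div_add_mod (a + 1) b
  have ha := Nat.div_add_mod a b
  rw [Nat.succ_div_of_not_dvd h] at hsucc
  omega

theorem mod_add_one_of_dvd {a b : ℕ} (h : b ∣ a + 1) : a % b + 1 = b := by
  have hsucc := Nat.div_add_mod (a + 1) b
  have ha := Nat.div_add_mod a b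
  rw [Nat.succ_div_of_dvd h, Nat.mod_eq_zero_of_dvd h, Nat.mul_add] at hsucc
  omega

end Nat

namespace Multiset

theorem forall_of_card_le_card_filter {α : Type*} {p : α → Prop} [DecidablePred p]
    {s : Multiset α} (h : card s ≤ card (s.filter p)) : ∀ x ∈ s, p x :=
  filter_eq_self.mp (eq_of_le_of_card_le (filter_le p s) h)

variable {α : Type*} [DecidableEq α] {s : Multiset α} {a b : α}

theorem card_cons_erase (ha : a ∈ s) : card (b ::ₘ s.erase a) = card s := by
  rw [card_cons, card_erase_add_one ha]

theorem card_filter_cons_erase_of_not {p : α → Prop} [DecidablePred p] (ha : a ∈ s)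
    (hpa : ¬p a) (hpb : p b) : card ((b ::ₘ s.erase a).filter p) = card (s.filter p) + 1 := by
  conv_rhs => rw [← cons_erase ha]
  rw [filter_cons_of_pos _ hpb, filter_cons_of_neg _ hpa, card_cons]

theorem le_of_mem_cons_erase [Preorder α] (hab : a ≤ b) (hmin : ∀ x ∈ s, a ≤ x) {x : α}
    (hx : x ∈ b ::ₘ s.erase a) : a ≤ x := by
  rcases mem_cons.mp hx with rfl | hx
  · exact hab
  · exact hmin x (mem_of_mem_erase hx)

end Multiset

open Multiset in
theorem succ_le_card_filter_succ_cons_erase {M : Multiset ℕ} {q r m : ℕ} (hr : r < card M)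
    (hmany : r ≤ card (M.filter (fun x => q + 1 ≤ x))) (hm : m ∈ M)
    (hmin : ∀ x ∈ M, m ≤ x) (hqm : q ≤ m) :
    r + 1 ≤ card (((m + 1) ::ₘ M.erase m).filter (fun x => q + 1 ≤ x)) := by
  rcases hqm.eq_or_lt with hqm | hlt
  · subst hqm
    rw [card_filter_cons_erase_of_not (p := fun x => q + 1 ≤ x) hm (by omega) le_rfl]
    omega
  · have hall x (hx : x ∈ (m + 1) ::ₘ M.erase m) : q + 1 ≤ x :=
      hlt.trans_le (le_of_mem_cons_erase m.le_succ hmin hx)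
    rwa [filter_eq_self.mpr hall, card_cons_erase hm]

theorem lfv_neighbor_invariant_general (g δ : ℕ)
    (M : Multiset ℕ) (hcard : Multiset.card M = δ)
    (hmany : g % δ ≤ Multiset.card (M.filter (fun x => g / δ + 1 ≤ x)))
    (hall : ∀ x ∈ M, g / δ ≤ x)
    (m : ℕ) (hm : m ∈ M) (hmin : ∀ x ∈ M, m ≤ x) :
    (g + 1) % δ ≤
        Multiset.card (((m + 1) ::ₘ M.erase m).filter (fun x => (g + 1) / δ + 1 ≤ x)) ∧
      ∀ x ∈ (m + 1) ::ₘ M.erase m, (g + 1) / δ ≤ x := by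
  have hδ : 0 < δ := hcard ▸ Multiset.card_pos_iff_exists_mem.mpr ⟨m, hm⟩
  have hr : g % δ < Multiset.card M := by rw [hcard]; exact Nat.mod_lt g hδ
  have hstep := succ_le_card_filter_succ_cons_erase hr hmany hm hmin (hall m hm)
  by_cases hdvd : δ ∣ g + 1
  · rw [Nat.succ_div_of_dvd hdvd, Nat.mod_eq_zero_of_dvd hdvd]
    refine ⟨Nat.zero_le _, Multiset.forall_of_card_le_card_filter ?_⟩
    rw [Multiset.card_cons_erase hm, hcard]
    exact (Nat.mod_add_one_of_dvd hdvd).ge.trans hstep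
  · rw [Nat.succ_div_of_not_dvd hdvd, Nat.succ_mod_of_not_dvd hdvd]
    exact ⟨hstep, fun x hx => (hall m hm).trans (Multiset.le_of_mem_cons_erase m.le_succ hmin hx)⟩

/-- LFV-v invariant. Let `M` be the multiset of the `δ` neighbor
frequencies of the current vertex, whose own frequency is `g`. If at least `g % δ`
elements of `M` are `≥ g/δ + 1` and all elements are `≥ g/δ`, then after visiting a
minimum-frequency neighbor (replacing a minimum `m` by `m + 1`) and increasing `g`
by one, the invariant still holds. -/
theorem lfv_neighbor_invariant (g δ : ℕ) (hδ : 1 ≤ δ)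
    (M : Multiset ℕ) (hcard : Multiset.card M = δ)
    (hmany : g % δ ≤ Multiset.card (M.filter (fun x => g / δ + 1 ≤ x)))
    (hall : ∀ x ∈ M, g / δ ≤ x)
    (m : ℕ) (hm : m ∈ M) (hmin : ∀ x ∈ M, m ≤ x) :
    (g + 1) % δ ≤
        Multiset.card (((m + 1) ::ₘ M.erase m).filter (fun x => (g + 1) / δ + 1 ≤ x)) ∧
      ∀ x ∈ (m + 1) ::ₘ M.erase m, (g + 1) / δ ≤ x :=
  lfv_neighbor_invariant_general g δ M hcard hmany hall m hm hmin
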